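/- Let n ≥ 2 and let x₁, x₂, x₃ ∈ [2, n−1] with gcd(xᵢ, n) = 1 for all i, with x₁ + x₂ + x₃ ≡ 1 (mod n), and such that (k·x₁)_n + (k·x₂)_n + (k·x₃)_n > n for every k ∈ [1, n−1]. Then the integer interval [2, n−1] is the disjoint union of X(x₁), X(x₂) and X(x₃); that is, every u ∈ [2, n−1] lies in exactly one of X(x₁), X(x₂), X(x₃). -/
import Mathlib

set_option maxHeartbeats 1000000


/-- For `n ≥ 2` and `x ∈ [1, n-1]` with `gcd(x, n) = 1`,
`X n x = {⌈tn/x⌉ : t ∈ [1, x-1]}`. -/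
def X (n x : ℕ) : Finset ℤ :=
  (Finset.Icc 1 (x - 1)).image fun t : ℕ => ⌈(t * n : ℚ) / x⌉

lemma aux_coprime {x n : ℕ} (hg : Nat.gcd x n = 1) : IsCoprime (n : ℤ) (x : ℤ) := by
  rw [Int.isCoprime_iff_gcd_eq_one, Int.gcd_natCast_natCast, Nat.gcd_comm]; exact hg

lemma aux_not_dvd {x n : ℕ} (hg : Nat.gcd x n = 1) {k : ℤ} (hk1 : 1 ≤ k)
    (hk2 : k ≤ (n : ℤ) - 1) : ¬ (n : ℤ) ∣ k * x := by
  intro h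
  have h2 : (n : ℤ) ∣ k := (aux_coprime hg).dvd_of_dvd_mul_right h
  have := Int.le_of_dvd (by omega) h2
  omega

/-- Membership criterion for `X`. -/
lemma mem_X_iff {n x : ℕ} (hn : 2 ≤ n) (hx2 : 2 ≤ x) (hx' : x ≤ n - 1)
    (hg : Nat.gcd x n = 1) {u : ℤ} (hu2 : 2 ≤ u) (hu' : u ≤ (n : ℤ) - 1) :
    u ∈ X n x ↔ (n : ℤ) < ((u - 1) * x) % n + x := by
  have hxn : (x : ℤ) < n := by omega
  have hn0 : (0 : ℤ) < n := by omega
  have hx0 : (0 : ℚ) < (x : ℚ) := by positivity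
  constructor
  · rintro hu
    simp only [X, Finset.mem_image, Finset.mem_Icc] at hu
    obtain ⟨t, ⟨ht1, ht2⟩, hceil⟩ := hu
    rw [Int.ceil_eq_iff] at hceil
    obtain ⟨hc1, hc2⟩ := hceil
    have ht2' : (t : ℤ) ≤ (x : ℤ) - 1 := by
      have : (t : ℤ) ≤ ((x - 1 : ℕ) : ℤ) := by exact_mod_cast ht2
      omega
    have ht1' : (1 : ℤ) ≤ t := by exact_mod_cast ht1
    -- translate to ℤ inequalities
    have hA : (u - 1) * x < (t : ℤ) * n := by
      have : ((u : ℚ) - 1) * x < (t : ℚ) * n := by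
        rw [lt_div_iff₀ hx0] at hc1
        calc ((u : ℚ) - 1) * x = ((u : ℚ) - 1) * x := rfl
          _ < t * n := hc1
      exact_mod_cast this
    have hB : (t : ℤ) * n ≤ u * x := by
      have : (t : ℚ) * n ≤ (u : ℚ) * x := by
        rw [div_le_iff₀ hx0] at hc2
        exact hc2
      exact_mod_cast this
    -- strictness
    have hBne : (t : ℤ) * n ≠ u * x := by
      intro heq
      have hdvd : (x : ℤ) ∣ (t : ℤ) * n := ⟨u, by linarith⟩
      have hcop : IsCoprime (x : ℤ) (n : ℤ) := (aux_coprime hg).symm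
      have : (x : ℤ) ∣ (t : ℤ) := hcop.dvd_of_dvd_mul_right hdvd
      have := Int.le_of_dvd (by omega) this
      omega
    obtain ⟨s, hsdef⟩ : ∃ s : ℤ, s = (t : ℤ) * n - (u - 1) * x := ⟨_, rfl⟩
    have hs1 : 1 ≤ s := by omega
    have hexp : u * (x : ℤ) = (u - 1) * x + x := by ring
    have hs2 : s ≤ (x : ℤ) - 1 := by omega
    have hmod : ((u - 1) * x) % n = (n : ℤ) - s := by
      have h0 : (u - 1) * x = ((n : ℤ) - s) + (n : ℤ) * ((t : ℤ) - 1) := by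
        rw [hsdef]; ring
      rw [h0, Int.add_mul_emod_self_left]
      exact Int.emod_eq_of_lt (by omega) (by omega)
    omega
  · intro hr
    set r : ℤ := ((u - 1) * x) % n with hrdef
    set q : ℤ := ((u - 1) * x) / n with hqdef
    have hqr : (n : ℤ) * q + r = (u - 1) * x := Int.mul_ediv_add_emod _ _
    have hr0 : 0 ≤ r := Int.emod_nonneg _ (by omega)
    have hrn : r < n := Int.emod_lt_of_pos _ hn0
    have hq0 : 0 ≤ q := Int.ediv_nonneg (mul_nonneg (by omega) (by positivity)) (by omega)
    have hlt : (q + 1) * n < u * x := by nlinarith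
    have hle : q + 1 ≤ (x : ℤ) - 1 := by
      by_contra h
      push_neg at h
      have hx1 : (x : ℤ) ≤ q + 1 := by omega
      have h1 : (x : ℤ) * n ≤ (q + 1) * n := by nlinarith
      have h2 : u * x ≤ ((n : ℤ) - 1) * x := by nlinarith
      nlinarith
    refine Finset.mem_image.mpr ⟨q.toNat + 1, Finset.mem_Icc.mpr ⟨by omega, ?_⟩, ?_⟩
    · have : (q.toNat : ℤ) = q := Int.toNat_of_nonneg hq0
      omega
    · rw [Int.ceil_eq_iff]
      have hq' : (q.toNat : ℤ) = q := Int.toNat_of_nonneg hq0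
      have hqq : ((q.toNat : ℕ) : ℚ) = ((q : ℤ) : ℚ) := by exact_mod_cast hq'
      have hcast : ((q.toNat + 1 : ℕ) : ℚ) = (q : ℚ) + 1 := by
        rw [Nat.cast_add, Nat.cast_one, hqq]
      constructor
      · rw [lt_div_iff₀ hx0]
        have hZ : (u - 1) * x < (q + 1) * n := by nlinarith
        have : ((u : ℚ) - 1) * x < ((q : ℚ) + 1) * n := by exact_mod_cast hZ
        rw [hcast]
        calc ((u : ℚ) - 1) * x < ((q : ℚ) + 1) * n := this
          _ = ((q : ℚ) + 1) * n := rfl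
      · rw [div_le_iff₀ hx0, hcast]
        have : ((q : ℚ) + 1) * n ≤ (u : ℚ) * x := by exact_mod_cast hlt.le
        exact this

lemma X_subset {n x : ℕ} (hn : 2 ≤ n) (hx2 : 2 ≤ x) (hx' : x ≤ n - 1) :
    X n x ⊆ Finset.Icc (2 : ℤ) ((n : ℤ) - 1) := by
  intro v hv
  simp only [X, Finset.mem_image, Finset.mem_Icc] at hv
  obtain ⟨t, ⟨ht1, ht2⟩, rfl⟩ := hv
  have hx0 : (0 : ℚ) < (x : ℚ) := by positivity
  have hxn : (x : ℚ) < n := by exact_mod_cast (by omega : (x:ℤ) < n)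
  have ht1' : (1 : ℚ) ≤ t := by exact_mod_cast ht1
  have ht2' : (t : ℚ) ≤ (x : ℚ) - 1 := by
    have : (t : ℤ) ≤ (x : ℤ) - 1 := by
      have : (t : ℤ) ≤ ((x - 1 : ℕ) : ℤ) := by exact_mod_cast ht2
      omega
    exact_mod_cast this
  rw [Finset.mem_Icc]
  constructor
  · have : (1 : ℤ) < ⌈(t * n : ℚ) / x⌉ := by
      rw [Int.lt_ceil, lt_div_iff₀ hx0]
      push_cast
      nlinarith
    omega
  · rw [Int.ceil_le, div_le_iff₀ hx0]
    push_cast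
    nlinarith

theorem stmt_15 (n : ℕ) (hn : 2 ≤ n) (x₁ x₂ x₃ : ℕ)
    (h₁ : 2 ≤ x₁) (h₁' : x₁ ≤ n - 1) (h₂ : 2 ≤ x₂) (h₂' : x₂ ≤ n - 1)
    (h₃ : 2 ≤ x₃) (h₃' : x₃ ≤ n - 1)
    (hg₁ : Nat.gcd x₁ n = 1) (hg₂ : Nat.gcd x₂ n = 1) (hg₃ : Nat.gcd x₃ n = 1)
    (hsum : x₁ + x₂ + x₃ ≡ 1 [MOD n])
    (hbig : ∀ k : ℕ, 1 ≤ k → k ≤ n - 1 →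
      ((k : ℤ) * x₁) % n + ((k : ℤ) * x₂) % n + ((k : ℤ) * x₃) % n > n) :
    X n x₁ ∪ X n x₂ ∪ X n x₃ = Finset.Icc (2 : ℤ) ((n : ℤ) - 1) ∧
    Disjoint (X n x₁) (X n x₂) ∧ Disjoint (X n x₁) (X n x₃) ∧
    Disjoint (X n x₂) (X n x₃) := by
  have hn0 : (0 : ℤ) < n := by omega
  -- hbig for integer k
  have hbig' : ∀ k : ℤ, 1 ≤ k → k ≤ (n : ℤ) - 1 →
      (k * x₁) % n + (k * x₂) % n + (k * x₃) % n > n := by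
    intro k hk1 hk2
    have h1 : 1 ≤ k.toNat := by omega
    have h2 : k.toNat ≤ n - 1 := by omega
    have := hbig k.toNat h1 h2
    rwa [Int.toNat_of_nonneg (by omega)] at this
  -- pairing lemma
  have hpair : ∀ x : ℕ, Nat.gcd x n = 1 → ∀ k : ℤ, 1 ≤ k → k ≤ (n : ℤ) - 1 →
      (k * x) % n + (((n : ℤ) - k) * x) % n = n := by
    intro x hg k hk1 hk2
    have hnd : ¬ (n : ℤ) ∣ k * x := aux_not_dvd hg hk1 hk2
    have h4 : (((n : ℤ) - k) * x) % n = (-(k * x)) % n := by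
      have he : ((n : ℤ) - k) * x = -(k * x) + (n : ℤ) * x := by ring
      rw [he, Int.add_mul_emod_self_left]
    rw [h4]
    have hr0 : 0 ≤ (k * x) % n := Int.emod_nonneg _ (by omega)
    have hrn : (k * x) % n < n := Int.emod_lt_of_pos _ hn0
    have hrne : (k * x) % n ≠ 0 := fun h => hnd (Int.dvd_of_emod_eq_zero h)
    have h5 : (-(k * x)) % n = (n : ℤ) - (k * x) % n := by
      have he : -(k * x) = ((n : ℤ) - (k * x) % n) + (n : ℤ) * (-(k * x / n) - 1) := by
        have := Int.mul_ediv_add_emod (k * x) n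
        linarith
      rw [he, Int.add_mul_emod_self_left]
      exact Int.emod_eq_of_lt (by omega) (by omega)
    omega
  -- the key identity: f k = n + k
  have hkey : ∀ k : ℤ, 1 ≤ k → k ≤ (n : ℤ) - 1 →
      (k * x₁) % n + (k * x₂) % n + (k * x₃) % n = n + k := by
    intro k hk1 hk2
    have hfk := hbig' k hk1 hk2
    have hfk' := hbig' ((n : ℤ) - k) (by omega) (by omega)
    have hp1 := hpair x₁ hg₁ k hk1 hk2
    have hp2 := hpair x₂ hg₂ k hk1 hk2
    have hp3 := hpair x₃ hg₃ k hk1 hk2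
    -- f k < 2n
    have hflt : (k * x₁) % n + (k * x₂) % n + (k * x₃) % n < 2 * n := by omega
    -- congruence
    have hS : (n : ℤ) ∣ ((1 : ℤ) - (x₁ + x₂ + x₃)) := by
      have := (Nat.ModEq.dvd hsum)
      push_cast at this ⊢
      exact this
    obtain ⟨c, hc⟩ := hS
    have hd : (n : ℤ) ∣ ((k * x₁) % n + (k * x₂) % n + (k * x₃) % n - k) := by
      refine ⟨-(k * c) - (k * x₁ / n) - (k * x₂ / n) - (k * x₃ / n), ?_⟩
      rw [Int.emod_def, Int.emod_def, Int.emod_def]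
      linear_combination (-k) * hc
    obtain ⟨d, hdd⟩ := hd
    have hfk2 : (k * x₁) % n + (k * x₂) % n + (k * x₃) % n = k + n * d := by omega
    have hd1 : d = 1 := by
      rcases lt_trichotomy d 1 with h | h | h
      · have : d ≤ 0 := by omega
        nlinarith
      · exact h
      · have : 2 ≤ d := by omega
        nlinarith
    rw [hd1, mul_one] at hdd
    omega
  -- exactly-one lemma
  have hone : ∀ u : ℤ, 2 ≤ u → u ≤ (n : ℤ) - 1 →
      ((u ∈ X n x₁ ∨ u ∈ X n x₂ ∨ u ∈ X n x₃) ∧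
        ¬(u ∈ X n x₁ ∧ u ∈ X n x₂) ∧ ¬(u ∈ X n x₁ ∧ u ∈ X n x₃) ∧
        ¬(u ∈ X n x₂ ∧ u ∈ X n x₃)) := by
    intro u hu2 hu'
    obtain ⟨k, hkd⟩ : ∃ k : ℤ, k = u - 1 := ⟨_, rfl⟩
    have hk1 : 1 ≤ k := by omega
    have hk2 : k ≤ (n : ℤ) - 1 := by omega
    have hSn : (x₁ : ℤ) + x₂ + x₃ = n + 1 := by
      have := hkey 1 le_rfl (by omega)
      rw [one_mul, one_mul, one_mul] at this
      rw [Int.emod_eq_of_lt (by omega) (by omega), Int.emod_eq_of_lt (by omega) (by omega),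
        Int.emod_eq_of_lt (by omega) (by omega)] at this
      omega
    have hrk := hkey k hk1 hk2
    have hru := hkey u (by omega) hu'
    -- relate (u*x)%n to (k*x)%n + x
    have hrel : ∀ x : ℕ, 2 ≤ x → x ≤ n - 1 → Nat.gcd x n = 1 →
        (u * x) % n = ((k * x) % n + x) % n := by
      intro x hx2 hx' hg
      have he : u * (x : ℤ) = k * x + x := by rw [hkd]; ring
      have hxx : (x : ℤ) % n = x := Int.emod_eq_of_lt (by omega) (by omega)
      rw [he, Int.add_emod (k * x) x n, hxx]
    -- case analysis values
    have hval : ∀ x : ℕ, 2 ≤ x → x ≤ n - 1 → Nat.gcd x n = 1 →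
        (if (n : ℤ) < (k * x) % n + x then (n : ℤ) else 0) =
          (k * x) % n + x - (u * x) % n := by
      intro x hx2 hx' hg
      have hr0 : 0 ≤ (k * x) % n := Int.emod_nonneg _ (by omega)
      have hrn : (k * x) % n < n := Int.emod_lt_of_pos _ hn0
      have hne : (k * x) % n + x ≠ n := by
        intro h
        have h0 : (u * x) % n = 0 := by
          rw [hrel x hx2 hx' hg, h]
          simp
        exact aux_not_dvd hg (by omega) hu' (Int.dvd_of_emod_eq_zero h0)
      rw [hrel x hx2 hx' hg]
      split_ifs with h
      · have hmm : ((k * x) % n + x) % n = (k * x) % n + x - n := by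
          have he : (k * x) % n + x = ((k * x) % n + x - n) + (n : ℤ) * 1 := by ring
          conv_lhs => rw [he, Int.add_mul_emod_self_left]
          exact Int.emod_eq_of_lt (by omega) (by omega)
        rw [hmm]; ring
      · have hmm : ((k * x) % n + x) % n = (k * x) % n + x :=
          Int.emod_eq_of_lt (by omega) (by omega)
        rw [hmm]; ring
    have hv1 := hval x₁ h₁ h₁' hg₁
    have hv2 := hval x₂ h₂ h₂' hg₂
    have hv3 := hval x₃ h₃ h₃' hg₃
    rw [mem_X_iff hn h₁ h₁' hg₁ hu2 hu', mem_X_iff hn h₂ h₂' hg₂ hu2 hu',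
      mem_X_iff hn h₃ h₃' hg₃ hu2 hu']
    rw [← hkd]
    split_ifs at hv1 hv2 hv3 <;> omega
  refine ⟨?_, ?_, ?_, ?_⟩
  · apply Finset.Subset.antisymm
    · refine Finset.union_subset (Finset.union_subset ?_ ?_) ?_ <;>
        [exact X_subset hn h₁ h₁'; exact X_subset hn h₂ h₂'; exact X_subset hn h₃ h₃']
    · intro u hu
      rw [Finset.mem_Icc] at hu
      have := (hone u hu.1 hu.2).1
      simp only [Finset.mem_union]
      tauto
  · rw [Finset.disjoint_left]
    intro a ha1 ha2
    have hb := Finset.mem_Icc.mp (X_subset hn h₁ h₁' ha1)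
    exact (hone a hb.1 hb.2).2.1 ⟨ha1, ha2⟩
  · rw [Finset.disjoint_left]
    intro a ha1 ha2
    have hb := Finset.mem_Icc.mp (X_subset hn h₁ h₁' ha1)
    exact (hone a hb.1 hb.2).2.2.1 ⟨ha1, ha2⟩
  · rw [Finset.disjoint_left]
    intro a ha1 ha2
    have hb := Finset.mem_Icc.mp (X_subset hn h₂ h₂' ha1)
    exact (hone a hb.1 hb.2).2.2.2 ⟨ha1, ha2⟩
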